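/- arXiv:0705.1581 — 3 statements merged into one kernel-verified Lean document; each statement's English description precedes it below -/
import Mathlib

section
/- For all integers i, j ≥ 1, each of the quantities (1 + (−1)^j)(2^{i+j} + 2^i + 4·(−1)^i)/6, (1 − (−1)^j)(2^{i+j} + 2^i)/6, and (1 + (−1)^j)(2^{i+j} + 2^i − 2·(−1)^i)/6 is an even integer. -/
lemma pow2_mod3 (n : ℕ) : (3:ℤ) ∣ 2 ^ n - (-1) ^ n := by
  induction n with
  | zero => simp
  | succ n ih =>
    have : (2:ℤ) ^ (n+1) - (-1) ^ (n+1) = 2 * (2 ^ n - (-1) ^ n) + 3 * (-1) ^ n := by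
      ring
    rw [this]
    exact dvd_add (Dvd.dvd.mul_left ih 2) ⟨(-1)^n, rfl⟩

/-- For all integers `i, j ≥ 1`, each of the quantities
`(1+(-1)^j)(2^(i+j)+2^i+4(-1)^i)/6`, `(1-(-1)^j)(2^(i+j)+2^i)/6`, and
`(1+(-1)^j)(2^(i+j)+2^i-2(-1)^i)/6` is an even integer (i.e. the numerator is `12 k`). -/
theorem stmt6 (i j : ℕ) (hi : 1 ≤ i) (hj : 1 ≤ j) :
    (∃ k : ℤ, (1 + (-1) ^ j) * (2 ^ (i + j) + 2 ^ i + 4 * (-1) ^ i) = 12 * k) ∧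
    (∃ k : ℤ, (1 - (-1) ^ j) * (2 ^ (i + j) + 2 ^ i) = 12 * k) ∧
    (∃ k : ℤ, (1 + (-1) ^ j) * (2 ^ (i + j) + 2 ^ i - 2 * (-1) ^ i) = 12 * k) := by
  obtain ⟨ka, hka⟩ := pow2_mod3 i
  obtain ⟨kb, hkb⟩ := pow2_mod3 (i + j)
  obtain ⟨a, ha⟩ : (2:ℤ) ∣ 2 ^ i := dvd_pow_self 2 (by omega)
  obtain ⟨b, hb⟩ : (2:ℤ) ∣ 2 ^ (i + j) := dvd_pow_self 2 (by omega)
  have hij : ((-1:ℤ)) ^ (i + j) = (-1) ^ i * (-1) ^ j := by rw [pow_add]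
  rcases Nat.even_or_odd i with hie | hio <;>
    rcases Nat.even_or_odd j with hje | hjo <;>
  · first
    | have e1 : ((-1:ℤ)) ^ i = 1 := Even.neg_one_pow ‹Even i›
    | have e1 : ((-1:ℤ)) ^ i = -1 := Odd.neg_one_pow ‹Odd i›
    first
    | have e2 : ((-1:ℤ)) ^ j = 1 := Even.neg_one_pow ‹Even j›
    | have e2 : ((-1:ℤ)) ^ j = -1 := Odd.neg_one_pow ‹Odd j›
    simp only [hij, e1, e2, one_mul, mul_one, mul_neg, neg_neg] at hka hkb ⊢
    generalize hA : (2:ℤ) ^ i = A at ha hka ⊢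
    generalize hB : (2:ℤ) ^ (i + j) = B at hb hkb ⊢
    refine ⟨?_, ?_, ?_⟩ <;> exact (show (12:ℤ) ∣ _ by omega)
end

section
/- The set {1, L₂ + L₃, L₂L₃} is a ℤ-basis of the centre of the group algebra ℤS₃, where L₂ = (1 2) and L₃ = (1 3) + (2 3) are the Jucys–Murphy elements. -/
/-- The element `g` of the symmetric group `S₃`, viewed in the group algebra `ℤS₃`. -/
noncomputable def e3 (σ : Equiv.Perm (Fin 3)) : MonoidAlgebra ℤ (Equiv.Perm (Fin 3)) :=
  MonoidAlgebra.of ℤ (Equiv.Perm (Fin 3)) σ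

/-- The Jucys–Murphy element `L₂ = (1 2)` of `ℤS₃`. -/
noncomputable def L2 : MonoidAlgebra ℤ (Equiv.Perm (Fin 3)) := e3 (Equiv.swap 0 1)

/-- The Jucys–Murphy element `L₃ = (1 3) + (2 3)` of `ℤS₃`. -/
noncomputable def L3 : MonoidAlgebra ℤ (Equiv.Perm (Fin 3)) := e3 (Equiv.swap 0 2) + e3 (Equiv.swap 1 2)

/-! The coefficients of a central element of `k[G]` are constant on conjugacy classes, so the
class sums form a basis of the centre. The conjugacy classes of `S₃` are `{1}`, the three
transpositions and the two 3-cycles, and `L₂ + L₃`, `L₂L₃` are exactly the sums of the last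
two. -/

namespace MonoidAlgebra

open Function

variable {k G : Type*} [CommSemiring k]

noncomputable def classSum [Monoid G] (s : Finset G) : MonoidAlgebra k G := ∑ g ∈ s, of k G g

theorem coeff_classSum [Monoid G] [DecidableEq G] (s : Finset G) (g : G) :
    (classSum s : MonoidAlgebra k G).coeff g = if g ∈ s then 1 else 0 := by
  simp [classSum, of_apply, coeff_single, Finsupp.single_apply]

variable [Group G]

theorem mem_center_iff_coeff_conj {x : MonoidAlgebra k G} :
    x ∈ Subalgebra.center k (MonoidAlgebra k G) ↔
      ∀ g h : G, x.coeff (g * h * g⁻¹) = x.coeff h := by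
  have single_comm_iff (g : G) :
      single g 1 * x = x * single g 1 ↔ ∀ h, x.coeff (g * h * g⁻¹) = x.coeff h := by
    rw [← coeff_inj, Finsupp.ext_iff, ← (Equiv.mulLeft g).forall_congr_right]
    simp [mul_assoc, eq_comm]
  rw [Subalgebra.mem_center_iff]
  refine ⟨fun hx g => (single_comm_iff g).1 (hx _), fun hx b => ?_⟩
  induction b using MonoidAlgebra.induction_on with
  | of g => exact (single_comm_iff g).2 (hx g)
  | add f g hf hg => rw [add_mul, mul_add, hf, hg]
  | smul r f hf => rw [smul_mul_assoc, mul_smul_comm, hf]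

theorem coeff_eq_of_isConj {x : MonoidAlgebra k G}
    (hx : x ∈ Subalgebra.center k (MonoidAlgebra k G)) {a b : G} (hab : IsConj a b) :
    x.coeff a = x.coeff b := by
  obtain ⟨c, rfl⟩ := isConj_iff.1 hab
  exact (mem_center_iff_coeff_conj.1 hx c a).symm

theorem classSum_mem_center {s : Finset G} (hs : ∀ a ∈ s, ∀ b, IsConj a b → b ∈ s) :
    (classSum s : MonoidAlgebra k G) ∈ Subalgebra.center k (MonoidAlgebra k G) := by
  classical
  refine mem_center_iff_coeff_conj.2 fun g h => ?_
  have hconj : IsConj h (g * h * g⁻¹) := isConj_iff.2 ⟨g, rfl⟩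
  have hmem : g * h * g⁻¹ ∈ s ↔ h ∈ s :=
    ⟨fun h' => hs _ h' _ hconj.symm, fun h' => hs _ h' _ hconj⟩
  simp only [coeff_classSum, hmem]

variable {ι : Type*} [Fintype ι] {r : ι → G} {s : ι → Finset G}

theorem coeff_sum_smul_classSum (hdisj : Pairwise (Disjoint on s)) (c : ι → k) {g : G} {i : ι}
    (hi : g ∈ s i) : (∑ j, c j • classSum (s j) : MonoidAlgebra k G).coeff g = c i := by
  classical
  simp only [coeff_sum, Finset.sum_apply', coeff_smul, Finsupp.smul_apply, coeff_classSum]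
  rw [Finset.sum_eq_single i (fun j _ hji => by simp [Finset.disjoint_left.1 (hdisj hji.symm) hi])
    (by simp), if_pos hi, smul_eq_mul, mul_one]

theorem linearIndependent_classSum (hr : ∀ i, r i ∈ s i) (hdisj : Pairwise (Disjoint on s)) :
    LinearIndependent k fun i => (classSum (s i) : MonoidAlgebra k G) :=
  Fintype.linearIndependent_iffₛ.2 fun c d hcd i => by
    rw [← coeff_sum_smul_classSum hdisj c (hr i), hcd, coeff_sum_smul_classSum hdisj d (hr i)]

theorem eq_sum_classSum_of_mem_center (hs : ∀ i g, g ∈ s i ↔ IsConj (r i) g)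
    (hcover : ∀ g, ∃ i, g ∈ s i) (hdisj : Pairwise (Disjoint on s)) {x : MonoidAlgebra k G}
    (hx : x ∈ Subalgebra.center k (MonoidAlgebra k G)) :
    x = ∑ i, x.coeff (r i) • classSum (s i) := by
  ext g
  obtain ⟨i, hi⟩ := hcover g
  rw [coeff_sum_smul_classSum hdisj _ hi]
  exact (coeff_eq_of_isConj hx ((hs i g).1 hi)).symm

theorem center_eq_span_classSum (hs : ∀ i g, g ∈ s i ↔ IsConj (r i) g)
    (hcover : ∀ g, ∃ i, g ∈ s i) (hdisj : Pairwise (Disjoint on s)) :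
    Subalgebra.toSubmodule (Subalgebra.center k (MonoidAlgebra k G)) =
      Submodule.span k (Set.range fun i => classSum (s i)) := by
  refine le_antisymm (fun x hx => ?_) (Submodule.span_le.2 ?_)
  · rw [eq_sum_classSum_of_mem_center hs hcover hdisj hx]
    exact Submodule.sum_mem _ fun i _ => Submodule.smul_mem _ _ (Submodule.subset_span ⟨i, rfl⟩)
  · rintro _ ⟨i, rfl⟩
    exact classSum_mem_center fun a ha b hab => (hs i b).2 (((hs i a).1 ha).trans hab)

end MonoidAlgebra

namespace S3

open Equiv MonoidAlgebra Function

def classRep : Fin 3 → Perm (Fin 3) := ![1, swap 0 1, swap 0 1 * swap 0 2]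

def conjClasses : Fin 3 → Finset (Perm (Fin 3)) :=
  ![{1}, {swap 0 1, swap 0 2, swap 1 2}, {swap 0 1 * swap 0 2, swap 0 1 * swap 1 2}]

theorem mem_conjClasses_iff (i : Fin 3) (g : Perm (Fin 3)) :
    g ∈ conjClasses i ↔ IsConj (classRep i) g := by
  rw [isConj_iff]
  revert i g
  decide

theorem exists_mem_conjClasses (g : Perm (Fin 3)) : ∃ i, g ∈ conjClasses i := by
  revert g
  decide

theorem pairwise_disjoint_conjClasses : Pairwise (Disjoint on conjClasses) := by
  unfold Pairwise onFun
  decide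

theorem classSum_conjClasses : (fun i => classSum (conjClasses i)) =
    ![(1 : MonoidAlgebra ℤ (Perm (Fin 3))), L2 + L3, L2 * L3] := by
  funext i
  fin_cases i <;> dsimp [conjClasses, classSum, L2, L3, e3]
  · rw [Finset.sum_singleton, map_one]
  · rw [Finset.sum_insert (by decide), Finset.sum_insert (by decide), Finset.sum_singleton]
  · rw [Finset.sum_insert (by decide), Finset.sum_singleton, mul_add, map_mul, map_mul]

end S3

/-- `{1, L₂ + L₃, L₂L₃}` is a ℤ-basis of the centre of `ℤS₃`: the family is linearly
independent and spans the centre as a ℤ-submodule. -/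
theorem stmt13 :
    LinearIndependent ℤ ![(1 : MonoidAlgebra ℤ (Equiv.Perm (Fin 3))), L2 + L3, L2 * L3] ∧
    Subalgebra.toSubmodule (Subalgebra.center ℤ (MonoidAlgebra ℤ (Equiv.Perm (Fin 3)))) =
      Submodule.span ℤ {(1 : MonoidAlgebra ℤ (Equiv.Perm (Fin 3))), L2 + L3, L2 * L3} := by
  have hrep (i : Fin 3) : S3.classRep i ∈ S3.conjClasses i :=
    (S3.mem_conjClasses_iff i _).2 (IsConj.refl _)
  rw [← S3.classSum_conjClasses]
  refine ⟨MonoidAlgebra.linearIndependent_classSum hrep S3.pairwise_disjoint_conjClasses, ?_⟩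
  rw [MonoidAlgebra.center_eq_span_classSum S3.mem_conjClasses_iff S3.exists_mem_conjClasses
    S3.pairwise_disjoint_conjClasses, S3.classSum_conjClasses, Matrix.range_cons,
    Matrix.range_cons_cons_empty, Set.singleton_union]
end

section
/- The 3×3 matrix M over ℤ[ξ] with rows (1+5ξ²+5ξ⁴+ξ⁶, 3+5ξ²+ξ⁴, 1), (2ξ²+4ξ⁴+ξ⁶, 1+4ξ²+ξ⁴, 1), (3ξ⁴+ξ⁶, 3ξ²+ξ⁴, 1) has inverse N with rows (1+ξ², −2ξ²−3, 2+ξ²), (−2ξ²−ξ⁴, 1+5ξ²+2ξ⁴, −1−3ξ²−ξ⁴), (3ξ⁴+ξ⁶, −3ξ²−7ξ⁴−2ξ⁶, 1+3ξ²+4ξ⁴+ξ⁶); in particular det M is a unit in ℤ[ξ]. -/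
open Polynomial

/-- The degree-3 transition matrix `M⁽³⁾` over `ℤ[ξ]`. -/
noncomputable def M3 : Matrix (Fin 3) (Fin 3) (Polynomial ℤ) :=
  !![1 + 5 * X ^ 2 + 5 * X ^ 4 + X ^ 6, 3 + 5 * X ^ 2 + X ^ 4, 1;
     2 * X ^ 2 + 4 * X ^ 4 + X ^ 6, 1 + 4 * X ^ 2 + X ^ 4, 1;
     3 * X ^ 4 + X ^ 6, 3 * X ^ 2 + X ^ 4, 1]

/-- The matrix `N⁽³⁾` over `ℤ[ξ]`. -/
noncomputable def N3 : Matrix (Fin 3) (Fin 3) (Polynomial ℤ) :=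
  !![1 + X ^ 2, -2 * X ^ 2 - 3, 2 + X ^ 2;
     -2 * X ^ 2 - X ^ 4, 1 + 5 * X ^ 2 + 2 * X ^ 4, -1 - 3 * X ^ 2 - X ^ 4;
     3 * X ^ 4 + X ^ 6, -3 * X ^ 2 - 7 * X ^ 4 - 2 * X ^ 6, 1 + 3 * X ^ 2 + 4 * X ^ 4 + X ^ 6]

lemma h1 : M3 * N3 = 1 := by
  apply Matrix.ext; intro i j
  fin_cases i <;> fin_cases j <;>
    simp [M3, N3, Matrix.mul_apply, Fin.sum_univ_three, Matrix.one_apply] <;> ring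

lemma h2 : N3 * M3 = 1 := by
  apply Matrix.ext; intro i j
  fin_cases i <;> fin_cases j <;>
    simp [M3, N3, Matrix.mul_apply, Fin.sum_univ_three, Matrix.one_apply] <;> ring

/-- `M⁽³⁾` has inverse `N⁽³⁾` over `ℤ[ξ]`; in particular `det M⁽³⁾` is a unit in `ℤ[ξ]`. -/
theorem stmt19 : M3 * N3 = 1 ∧ N3 * M3 = 1 ∧ IsUnit M3.det := by
  refine ⟨h1, h2, ?_⟩
  exact Matrix.isUnit_iff_isUnit_det M3 |>.mp ⟨⟨M3, N3, h1, h2⟩, rfl⟩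
end
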